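/- Let R_n be the semigroup counting function of the torus knot T(2,2n+1), i.e. R_n(k) = 0 for k ≤ 0, R_n(k) = ⌊(k+1)/2⌋ for 0 < k < 2n+1, and R_n(k) = k - n for k ≥ 2n+1. Then the infimal convolution R_a ⋄ R_b equals R_{a+b}. -/

import Mathlib

/-- The semigroup counting function `R_n` of the torus knot `T(2,2n+1)`. -/
def Rm (m k : ℤ) : ℤ :=
  if k ≤ 0 then 0 else if k < 2 * m + 1 then (k + 1) / 2 else k - m

/-! Each `Rm n` is piecewise linear with three pieces, so both directions reduce to linear
integer arithmetic after splitting on the pieces. A minimiser of `i ↦ R_a(i) + R_b(m - i)`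
spends as much of `m` as possible on `R_a`, up to its conductor `2a`: take `i = m` when
`m ≤ 2a` and `i = 2a` when `m > 2a`. -/

theorem Rm_of_nonpos (n : ℤ) {k : ℤ} (hk : k ≤ 0) : Rm n k = 0 := if_pos hk

theorem Rm_add_le_add (a b i j : ℤ) (ha : 0 ≤ a) (hb : 0 ≤ b) :
    Rm (a + b) (i + j) ≤ Rm a i + Rm b j := by
  simp only [Rm]
  split_ifs <;> omega

theorem Rm_add_of_le_two_mul (a b m : ℤ) (hb : 0 ≤ b) (hm : m ≤ 2 * a) :
    Rm (a + b) m = Rm a m := by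
  simp only [Rm]
  split_ifs <;> omega

theorem Rm_two_mul_add_Rm_sub_two_mul (a b m : ℤ) (ha : 0 ≤ a) (hm : 2 * a < m) :
    Rm a (2 * a) + Rm b (m - 2 * a) = Rm (a + b) m := by
  simp only [Rm]
  split_ifs <;> omega

/-- the infimal convolution `R_a ⋄ R_b` equals `R_{a+b}`:
for every `m`, `R_{a+b}(m)` is the least element of
`{R_a(i) + R_b(m-i) : i ∈ ℤ}`. -/
theorem Rm_infConvolution (a b : ℤ) (ha : 0 ≤ a) (hb : 0 ≤ b) (m : ℤ) :
    IsLeast {v : ℤ | ∃ i : ℤ, v = Rm a i + Rm b (m - i)} (Rm (a + b) m) := by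
  refine ⟨?_, ?_⟩
  · rcases le_or_gt m (2 * a) with hm | hm
    · refine ⟨m, ?_⟩
      rw [sub_self, Rm_of_nonpos b le_rfl, add_zero, Rm_add_of_le_two_mul a b m hb hm]
    · exact ⟨2 * a, (Rm_two_mul_add_Rm_sub_two_mul a b m ha hm).symm⟩
  · rintro v ⟨i, rfl⟩
    simpa using Rm_add_le_add a b i (m - i) ha hb
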